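/- arXiv:2410.16553 — 8 statements merged into one kernel-verified Lean document; each statement's English description precedes it below -/
import Mathlib

section
/- Let D be an m×n matrix over 𝔽₂. Suppose U is an invertible upper-triangular m×m matrix and V, V′ are invertible upper-triangular n×n matrices such that both R = U·D·V and R′ = D·V′ are reduced. Then for every column index j, column j of R is zero if and only if column j of R′ is zero, and whenever these columns are nonzero, low(R,j) = low(R′,j). (Equivalently: the persistence pairing determined by a reduced form of D does not change if, in the reduction process, one also performs row operations rowᵢ ← rowᵢ + rowⱼ with j > i, i.e. adding rows bottom-up.) -/
/-!
If `R` is reduced, the columns `b ≤ j` with `low(R, b) ≥ i` have pairwise distinct pivots in the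
lower-left block `R[i.., ..j]`, and every other column of that block vanishes; so their number is
the rank of the block. For `R = U D V` with `U`, `V` invertible upper triangular, this block is
`U[i.., i..] · D[i.., ..j] · V[..j, ..j]` with invertible outer factors, so its rank is that of
`D[i.., ..j]`, whichever reduction was used. Comparing the counts over the columns `≤ j` and `< j`
tells whether `low(R, j) ≥ i`, for every `i`, and this determines `low(R, j)`.
-/

open Matrix

/-- The `low` of column `j` of `R`: the largest row index `i` with `R i j ≠ 0`,
or `⊥` if the column is zero. -/
def low {m n : ℕ} (R : Matrix (Fin m) (Fin n) (ZMod 2)) (j : Fin n) : WithBot (Fin m) :=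
  (Finset.univ.filter fun i => R i j ≠ 0).max

/-- `R` is reduced if no two distinct nonzero columns have equal lows. -/
def Reduced {m n : ℕ} (R : Matrix (Fin m) (Fin n) (ZMod 2)) : Prop :=
  ∀ j₁ j₂ : Fin n, low R j₁ ≠ ⊥ → low R j₁ = low R j₂ → j₁ = j₂

/-- A square matrix is upper triangular if `V i j = 0` whenever `i > j`. -/
def UpperTri {k : ℕ} (V : Matrix (Fin k) (Fin k) (ZMod 2)) : Prop :=
  ∀ i j : Fin k, j < i → V i j = 0

open Finset

theorem WithBot.eq_of_forall_coe_le_iff' {α : Type*} [PartialOrder α] {x y : WithBot α}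
    (h : ∀ a : α, (a : WithBot α) ≤ x ↔ (a : WithBot α) ≤ y) : x = y := by
  induction x using WithBot.recBotCoe <;> induction y using WithBot.recBotCoe
  · rfl
  · simpa using (h _).2 le_rfl
  · simpa using (h _).1 le_rfl
  · exact le_antisymm (by simpa using (h _).1 le_rfl) (by simpa using (h _).2 le_rfl)

theorem Finset.card_filter_Iic {β : Type*} [PartialOrder β] [LocallyFiniteOrderBot β]
    [DecidableEq β] (P : β → Prop) [DecidablePred P] (j : β) :
    #{b ∈ Iic j | P b} = #{b ∈ Iio j | P b} + if P j then 1 else 0 := by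
  rw [← Iio_insert, filter_insert]
  split_ifs
  · exact card_insert_of_notMem fun h => lt_irrefl j (mem_Iio.mp (mem_filter.mp h).1)
  · rfl

namespace Matrix

variable {K α β : Type*} [Fintype α] [LinearOrder α]

section ColLow

variable [Zero K] [DecidableEq K]

/-- `low` for arbitrary index and coefficient types: `low R` unfolds to `colLow R`. -/
def colLow (M : Matrix α β K) (b : β) : WithBot α :=
  (univ.filter fun a => M a b ≠ 0).max

def IsReduced (M : Matrix α β K) : Prop :=
  ∀ b₁ b₂, colLow M b₁ ≠ ⊥ → colLow M b₁ = colLow M b₂ → b₁ = b₂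

theorem colLow_eq_bot_iff {M : Matrix α β K} {b : β} : colLow M b = ⊥ ↔ ∀ a, M a b = 0 := by
  simp [colLow, Finset.max_eq_bot, Finset.filter_eq_empty_iff]

theorem colLow_eq_coe_iff {M : Matrix α β K} {b : β} {a : α} :
    colLow M b = a ↔ M a b ≠ 0 ∧ ∀ a', a < a' → M a' b = 0 := by
  constructor
  · intro h
    refine ⟨by simpa using Finset.mem_of_max h, fun a' ha' => by_contra fun h' => ?_⟩
    have := Finset.le_max (s := univ.filter fun a => M a b ≠ 0) (by simpa using h')
    rw [← colLow, h, WithBot.coe_le_coe] at this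
    exact absurd ha' (not_lt.mpr this)
  · rintro ⟨ha, hgt⟩
    refine le_antisymm (Finset.max_le fun a' ha' => WithBot.coe_le_coe.mpr ?_)
      (Finset.le_max (by simpa using ha))
    exact not_lt.mp fun h => (mem_filter.mp ha').2 (hgt a' h)

theorem le_colLow {M : Matrix α β K} {a : α} {b : β} (h : M a b ≠ 0) :
    (a : WithBot α) ≤ colLow M b :=
  Finset.le_max (by simpa using h)

theorem apply_eq_zero_of_colLow_lt {M : Matrix α β K} {a : α} {b : β} (h : colLow M b < a) :
    M a b = 0 :=
  by_contra fun h' => (le_colLow h').not_gt h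

variable [LocallyFiniteOrderTop α] {M : Matrix α β K} {i : α} {q : β → Prop}

theorem colLow_toBlock_Ici_eq_coe {b : {b // q b}} {a : {a // a ∈ Ici i}}
    (h : colLow (M.toBlock (· ∈ Ici i) q) b = a) : colLow M b = (a : α) := by
  obtain ⟨hpiv, habove⟩ := colLow_eq_coe_iff.mp h
  refine colLow_eq_coe_iff.mpr ⟨hpiv, fun a' ha' => ?_⟩
  exact habove ⟨a', mem_Ici.mpr ((mem_Ici.mp a.2).trans ha'.le)⟩ ha'

theorem colLow_toBlock_Ici_ne_bot_iff {b : {b // q b}} :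
    colLow (M.toBlock (· ∈ Ici i) q) b ≠ ⊥ ↔ (i : WithBot α) ≤ colLow M b := by
  constructor
  · intro h
    obtain ⟨a, ha⟩ := WithBot.ne_bot_iff_exists.mp h
    rw [colLow_toBlock_Ici_eq_coe ha.symm, WithBot.coe_le_coe]
    exact mem_Ici.mp a.2
  · intro h
    obtain ⟨a, ha⟩ := WithBot.ne_bot_iff_exists.mp (ne_bot_of_le_ne_bot WithBot.coe_ne_bot h)
    rw [← ha, WithBot.coe_le_coe] at h
    rw [Ne, colLow_eq_bot_iff, not_forall]
    exact ⟨⟨a, mem_Ici.mpr h⟩, (colLow_eq_coe_iff.mp ha.symm).1⟩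

theorem IsReduced.toBlock_Ici (hM : IsReduced M) (i : α) (q : β → Prop) :
    IsReduced (M.toBlock (· ∈ Ici i) q) := by
  intro b₁ b₂ hb₁ heq
  obtain ⟨a, ha⟩ := WithBot.ne_bot_iff_exists.mp hb₁
  have h₁ := colLow_toBlock_Ici_eq_coe ha.symm
  have h₂ := colLow_toBlock_Ici_eq_coe (heq ▸ ha.symm)
  exact Subtype.ext (hM _ _ (h₁ ▸ WithBot.coe_ne_bot) (h₁.trans h₂.symm))

end ColLow

section Rank

variable [Field K] [DecidableEq K] {M : Matrix α β K}

theorem linearIndependent_col_of_isReduced [Fintype β] (hM : IsReduced M) :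
    LinearIndependent K fun b : {b // colLow M b ≠ ⊥} => M.col b := by
  rw [Fintype.linearIndependent_iff]
  intro g hg
  by_contra! hne
  obtain ⟨b, hb, hmax⟩ := (univ.filter fun b => g b ≠ 0).exists_max_image (fun b => colLow M b)
    (by simpa [Finset.Nonempty] using hne)
  obtain ⟨a, ha⟩ := WithBot.ne_bot_iff_exists.mp b.2
  -- `b` has the highest pivot among the columns used, so they all vanish at its pivot row `a`
  have hrow : ∑ b', g b' * M a b' = g b * M a b := Fintype.sum_eq_single b fun b' hb' => by
    by_cases hg' : g b' = 0
    · rw [hg', zero_mul]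
    have hlt : colLow M b' < a := ha ▸ (hmax b' (by simpa using hg')).lt_of_ne
      fun h => hb' (Subtype.ext (hM _ _ b'.2 h))
    rw [apply_eq_zero_of_colLow_lt hlt, mul_zero]
  have hsum := congrFun hg a
  simp only [Finset.sum_apply, Pi.smul_apply, col_apply, smul_eq_mul, Pi.zero_apply] at hsum
  exact mul_ne_zero (by simpa using hb) (colLow_eq_coe_iff.mp ha.symm).1 (hrow ▸ hsum)

theorem rank_eq_card_of_isReduced [Fintype β] (hM : IsReduced M) :
    M.rank = #{b | colLow M b ≠ ⊥} := by
  have hspan : Submodule.span K (Set.range M.col) =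
      Submodule.span K (Set.range fun b : {b // colLow M b ≠ ⊥} => M.col b) := by
    refine le_antisymm (Submodule.span_le.mpr ?_)
      (Submodule.span_mono fun _ ⟨b, hb⟩ => ⟨b, hb⟩)
    rintro _ ⟨b, rfl⟩
    by_cases hb : colLow M b = ⊥
    · have hzero : M.col b = 0 := funext (colLow_eq_bot_iff.mp hb)
      exact hzero ▸ zero_mem _
    · exact Submodule.subset_span ⟨⟨b, hb⟩, rfl⟩
  rw [rank_eq_finrank_span_cols, hspan,
    finrank_span_eq_card (linearIndependent_col_of_isReduced hM), Fintype.card_subtype]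

theorem rank_toBlock_Ici_of_isReduced [LocallyFiniteOrderTop α] (hM : IsReduced M) (i : α)
    (t : Finset β) :
    (M.toBlock (· ∈ Ici i) (· ∈ t)).rank = #{b ∈ t | (i : WithBot α) ≤ colLow M b} := by
  rw [rank_eq_card_of_isReduced (hM.toBlock_Ici i _)]
  simp_rw [colLow_toBlock_Ici_ne_bot_iff]
  rw [univ_eq_attach, filter_attach (fun b => (i : WithBot α) ≤ colLow M b), card_map,
    card_attach]

end Rank

section Triangular

variable [CommRing K]

theorem toBlock_mul_of_isUpperSet {γ : Type*} {U : Matrix α α K} (hU : U.IsUpperTriangular)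
    (M : Matrix α γ K) {s : Finset α} (hs : IsUpperSet (s : Set α)) (r : γ → Prop) :
    (U * M).toBlock (· ∈ s) r = U.toBlock (· ∈ s) (· ∈ s) * M.toBlock (· ∈ s) r := by
  have hzero : U.toBlock (· ∈ s) (· ∉ s) = 0 := by
    ext a c
    exact hU (lt_of_not_ge fun h => c.2 (hs h a.2))
  rw [toBlock_mul_eq_add _ (· ∈ s), hzero, Matrix.zero_mul, add_zero]
  -- the two sides sum over `s` with different (equal) `Fintype` instances
  convert rfl

theorem toBlock_mul_of_isLowerSet {γ : Type*} [Fintype β] [LinearOrder β] (M : Matrix γ β K)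
    {V : Matrix β β K} (hV : V.IsUpperTriangular) {t : Finset β} (ht : IsLowerSet (t : Set β))
    (p : γ → Prop) :
    (M * V).toBlock p (· ∈ t) = M.toBlock p (· ∈ t) * V.toBlock (· ∈ t) (· ∈ t) := by
  have hzero : V.toBlock (· ∉ t) (· ∈ t) = 0 := by
    ext c b
    exact hV (lt_of_not_ge fun h => c.2 (ht h b.2))
  rw [toBlock_mul_eq_add _ (· ∈ t), hzero, Matrix.mul_zero, add_zero]
  convert rfl

theorem isUnit_det_toBlock_of_isUpperTriangular {U : Matrix α α K} (hU : U.IsUpperTriangular)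
    (hdet : IsUnit U.det) (s : Finset α) : IsUnit (U.toBlock (· ∈ s) (· ∈ s)).det := by
  have hblock : (U.toBlock (· ∈ s) (· ∈ s)).IsUpperTriangular := fun _ _ h => hU h
  rw [det_of_isUpperTriangular hU, IsUnit.prod_univ_iff] at hdet
  rw [det_of_isUpperTriangular hblock, IsUnit.prod_univ_iff]
  exact fun a => hdet a

theorem rank_toBlock_mul_mul [Fintype β] [LinearOrder β] {U : Matrix α α K}
    {V : Matrix β β K} (hU : U.IsUpperTriangular) (hUdet : IsUnit U.det)
    (hV : V.IsUpperTriangular) (hVdet : IsUnit V.det) (M : Matrix α β K) {s : Finset α}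
    {t : Finset β} (hs : IsUpperSet (s : Set α)) (ht : IsLowerSet (t : Set β)) :
    ((U * M * V).toBlock (· ∈ s) (· ∈ t)).rank = (M.toBlock (· ∈ s) (· ∈ t)).rank := by
  rw [toBlock_mul_of_isLowerSet _ hV ht, toBlock_mul_of_isUpperSet hU _ hs,
    rank_mul_eq_left_of_isUnit_det _ _ (isUnit_det_toBlock_of_isUpperTriangular hV hVdet t),
    rank_mul_eq_right_of_isUnit_det _ _ (isUnit_det_toBlock_of_isUpperTriangular hU hUdet s)]

end Triangular

end Matrix

theorem card_filter_le_low_eq_rank_toBlock {m n : ℕ} {D : Matrix (Fin m) (Fin n) (ZMod 2)}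
    {U : Matrix (Fin m) (Fin m) (ZMod 2)} {V : Matrix (Fin n) (Fin n) (ZMod 2)}
    (hU : IsUnit U) (hUt : UpperTri U) (hV : IsUnit V) (hVt : UpperTri V)
    (hR : Reduced (U * D * V)) (i : Fin m) {t : Finset (Fin n)}
    (ht : IsLowerSet (t : Set (Fin n))) :
    #{b ∈ t | (i : WithBot (Fin m)) ≤ low (U * D * V) b} =
      (D.toBlock (· ∈ Ici i) (· ∈ t)).rank := by
  rw [← rank_toBlock_mul_mul (fun a b h => hUt a b h) ((isUnit_iff_isUnit_det U).mp hU)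
    (fun a b h => hVt a b h) ((isUnit_iff_isUnit_det V).mp hV) D
    (by simpa using isUpperSet_Ici i) ht]
  exact (rank_toBlock_Ici_of_isReduced hR i t).symm

/-- pairing invariance under additional bottom-up row operations. -/
theorem stmt_0 {m n : ℕ} (D : Matrix (Fin m) (Fin n) (ZMod 2))
    (U : Matrix (Fin m) (Fin m) (ZMod 2)) (V V' : Matrix (Fin n) (Fin n) (ZMod 2))
    (hU : IsUnit U) (hUt : UpperTri U)
    (hV : IsUnit V) (hVt : UpperTri V)
    (hV' : IsUnit V') (hV't : UpperTri V')
    (hR : Reduced (U * D * V)) (hR' : Reduced (D * V')) :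
    ∀ j : Fin n, low (U * D * V) j = low (D * V') j := by
  have hcount : ∀ (i : Fin m) (t : Finset (Fin n)), IsLowerSet (t : Set (Fin n)) →
      #{b ∈ t | (i : WithBot (Fin m)) ≤ low (U * D * V) b} =
        #{b ∈ t | (i : WithBot (Fin m)) ≤ low (D * V') b} := by
    intro i t ht
    have h' := card_filter_le_low_eq_rank_toBlock (U := 1) isUnit_one
      (fun a b h => one_apply_ne h.ne') hV' hV't (by rwa [Matrix.one_mul]) i ht
    rw [Matrix.one_mul] at h'
    rw [card_filter_le_low_eq_rank_toBlock hU hUt hV hVt hR i ht, h']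
  intro j
  refine WithBot.eq_of_forall_coe_le_iff' fun i => ?_
  have hIic := hcount i (Iic j) (by simpa using isLowerSet_Iic j)
  have hIio := hcount i (Iio j) (by simpa using isLowerSet_Iio j)
  rw [card_filter_Iic, card_filter_Iic, hIio] at hIic
  split_ifs at hIic with h h' h' <;>
    first | omega | exact iff_of_true h h' | exact iff_of_false h h'
end

section
/- Let D be an m×n matrix over 𝔽₂ and let V, V′ be invertible upper-triangular n×n matrices such that R = D·V and R′ = D·V′ are both reduced. Then for every column index j, column j of R is zero if and only if column j of R′ is zero, and whenever these columns are nonzero, low(R,j) = low(R′,j). (Although a reduced matrix obtained from D by left-to-right column additions is not unique, its pivots are, so all reduced matrices produce the same persistence pairing.) -/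
/-! Since `D * V = (D * V') * (V'⁻¹ * V)` with `V'⁻¹ * V` upper triangular, every column `j` of
`D * V` is a combination of columns `k ≤ j` of `D * V'`. In a reduced matrix the nonzero lows
are distinct, so the low of such a combination is the largest low among the columns used: no
cancellation can occur. Hence each low of `D * V` in column `j` is a low of `D * V'` in some
column `k ≤ j`, and induction on `j` (with the roles of `V` and `V'` swapped as needed) shows
that `k = j`. -/

open Matrix

open Finset

section VectorLow

variable {m : ℕ} {α : Type*} [Zero α] [DecidableEq α]

def vlow (v : Fin m → α) : WithBot (Fin m) :=
  (univ.filter fun i => v i ≠ 0).max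

theorem low_eq_vlow {n : ℕ} (R : Matrix (Fin m) (Fin n) (ZMod 2)) (j : Fin n) :
    low R j = vlow fun i => R i j :=
  rfl

theorem le_vlow {v : Fin m → α} {i : Fin m} (h : v i ≠ 0) : (i : WithBot (Fin m)) ≤ vlow v :=
  le_max (by simpa using h)

theorem eq_zero_of_vlow_lt {v : Fin m → α} {i : Fin m} (h : vlow v < i) : v i = 0 := by
  by_contra hi
  exact (le_vlow hi).not_gt h

theorem vlow_eq_coe_iff {v : Fin m → α} {i : Fin m} :
    vlow v = i ↔ v i ≠ 0 ∧ ∀ i', i < i' → v i' = 0 := by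
  refine ⟨fun h => ⟨by simpa using mem_of_max h, fun i' hi' => eq_zero_of_vlow_lt ?_⟩,
    fun ⟨hi, hgt⟩ => le_antisymm (Finset.max_le fun i' hi' => ?_) (le_vlow hi)⟩
  · exact h ▸ WithBot.coe_lt_coe.2 hi'
  · by_contra hlt
    exact (by simpa using hi' : v i' ≠ 0) (hgt i' (WithBot.coe_lt_coe.1 (not_le.1 hlt)))

theorem vlow_eq_bot_iff {v : Fin m → α} : vlow v = ⊥ ↔ v = 0 := by
  simp [vlow, Finset.max_eq_bot, filter_eq_empty_iff, funext_iff]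

end VectorLow

section Reduced

variable {m n : ℕ}

theorem exists_low_eq_vlow_mulVec {R : Matrix (Fin m) (Fin n) (ZMod 2)} (hR : Reduced R)
    {c : Fin n → ZMod 2} (hc : R *ᵥ c ≠ 0) : ∃ k, c k ≠ 0 ∧ low R k = vlow (R *ᵥ c) := by
  have hsupp : (univ.filter fun k => c k ≠ 0).Nonempty := by
    contrapose! hc
    have hc0 : c = 0 := funext fun k => by simpa using filter_eq_empty_iff.1 hc (mem_univ k)
    rw [hc0, mulVec_zero]
  obtain ⟨k₀, hk₀, hmax⟩ := exists_max_image _ (low R) hsupp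
  simp only [mem_filter, mem_univ, true_and] at hk₀ hmax
  obtain ⟨i₀, hi₀⟩ : ∃ i₀ : Fin m, low R k₀ = i₀ := by
    refine (WithBot.ne_bot_iff_exists.1 ?_).imp fun _ => Eq.symm
    refine fun hbot => hc (funext fun i =>
      (sum_eq_zero fun k _ => ?_ : ∑ k, R i k * c k = 0))
    by_cases hck : c k = 0
    · simp [hck]
    · have : low R k < i := (hmax k hck).trans_lt (hbot ▸ WithBot.bot_lt_coe i)
      simp [eq_zero_of_vlow_lt this]
  -- Reducedness makes every other column in the support of `c` end strictly above row `i₀`.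
  have hcol : ∀ i, i₀ ≤ i → (R *ᵥ c) i = R i k₀ * c k₀ := by
    intro i hi
    refine sum_eq_single k₀ (fun k _ hk => ?_) fun h => absurd (mem_univ k₀) h
    by_cases hck : c k = 0
    · simp [hck]
    · have hlt : low R k < i₀ := (hi₀ ▸ hmax k hck).lt_of_ne fun h =>
        hk (hR k k₀ (h ▸ WithBot.coe_ne_bot) (h.trans hi₀.symm))
      simp [eq_zero_of_vlow_lt (hlt.trans_le (WithBot.coe_le_coe.2 hi))]
  refine ⟨k₀, hk₀, hi₀.trans (vlow_eq_coe_iff.2 ⟨?_, fun i hi => ?_⟩).symm⟩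
  · rw [hcol i₀ le_rfl]
    exact mul_ne_zero ((vlow_eq_coe_iff.1 hi₀).1) hk₀
  · rw [hcol i hi.le, (vlow_eq_coe_iff.1 hi₀).2 i hi, zero_mul]

theorem exists_le_low_eq_of_mul_upperTri {R : Matrix (Fin m) (Fin n) (ZMod 2)} (hR : Reduced R)
    {W : Matrix (Fin n) (Fin n) (ZMod 2)} (hW : UpperTri W) {j : Fin n}
    (hj : low (R * W) j ≠ ⊥) : ∃ k ≤ j, low R k = low (R * W) j := by
  have hcol : (fun i => (R * W) i j) = R *ᵥ fun k => W k j := rfl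
  rw [low_eq_vlow, hcol] at hj ⊢
  obtain ⟨k, hk, hlow⟩ := exists_low_eq_vlow_mulVec hR (vlow_eq_bot_iff.not.1 hj)
  exact ⟨k, not_lt.1 fun hjk => hk (hW k j hjk), hlow⟩

theorem low_eq_of_low_ne_bot {R R' : Matrix (Fin m) (Fin n) (ZMod 2)} (hR : Reduced R)
    (hR' : Reduced R') {W : Matrix (Fin n) (Fin n) (ZMod 2)} (hW : UpperTri W)
    (hRW : R = R' * W) {j : Fin n} (hlt : ∀ k < j, low R k = low R' k) (hj : low R j ≠ ⊥) :
    low R' j = low R j := by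
  obtain ⟨k, hkj, hk⟩ := exists_le_low_eq_of_mul_upperTri hR' hW (hRW ▸ hj)
  rw [← hRW] at hk
  obtain rfl | hkj := hkj.eq_or_lt
  · exact hk
  · have hRk : low R k = low R j := (hlt k hkj).trans hk
    exact absurd (hR k j (hRk ▸ hj) hRk) hkj.ne

theorem low_eq_of_mul_upperTri {R R' : Matrix (Fin m) (Fin n) (ZMod 2)} (hR : Reduced R)
    (hR' : Reduced R') {W W' : Matrix (Fin n) (Fin n) (ZMod 2)} (hW : UpperTri W)
    (hW' : UpperTri W') (hRW : R = R' * W) (hR'W : R' = R * W') (j : Fin n) :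
    low R j = low R' j := by
  induction j using WellFoundedLT.induction with
  | _ j ih =>
    by_cases h : low R j = ⊥
    · by_cases h' : low R' j = ⊥
      · rw [h, h']
      · exact low_eq_of_low_ne_bot hR' hR hW' hR'W (fun k hk => (ih k hk).symm) h'
    · exact (low_eq_of_low_ne_bot hR hR' hW hRW ih h).symm

end Reduced

namespace UpperTri

variable {n : ℕ} {V W : Matrix (Fin n) (Fin n) (ZMod 2)}

theorem iff_isUpperTriangular : UpperTri V ↔ V.IsUpperTriangular :=
  Iff.rfl

theorem mul (hV : UpperTri V) (hW : UpperTri W) : UpperTri (V * W) :=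
  iff_isUpperTriangular.2 <| (iff_isUpperTriangular.1 hV).mul (iff_isUpperTriangular.1 hW)

theorem inv (hV : UpperTri V) (hunit : IsUnit V) : UpperTri V⁻¹ :=
  have : Invertible V := invertibleOfIsUnitDet V ((isUnit_iff_isUnit_det V).1 hunit)
  iff_isUpperTriangular.2 <| blockTriangular_inv_of_blockTriangular (iff_isUpperTriangular.1 hV)

end UpperTri

/-- uniqueness of pivots of reduced forms. -/
theorem stmt_1 {m n : ℕ} (D : Matrix (Fin m) (Fin n) (ZMod 2))
    (V V' : Matrix (Fin n) (Fin n) (ZMod 2))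
    (hV : IsUnit V) (hVt : UpperTri V)
    (hV' : IsUnit V') (hV't : UpperTri V')
    (hR : Reduced (D * V)) (hR' : Reduced (D * V')) :
    ∀ j : Fin n, low (D * V) j = low (D * V') j := by
  have hchange {A B : Matrix (Fin n) (Fin n) (ZMod 2)} (hB : IsUnit B) :
      D * A = D * B * (B⁻¹ * A) := by
    rw [Matrix.mul_assoc, mul_nonsing_inv_cancel_left _ _ ((isUnit_iff_isUnit_det B).1 hB)]
  exact low_eq_of_mul_upperTri hR hR' ((hV't.inv hV').mul hVt) ((hVt.inv hV).mul hV't)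
    (hchange hV') (hchange hV)
end

section
/- For every m×n matrix D over 𝔽₂ there exists an invertible upper-triangular n×n matrix V over 𝔽₂ such that D·V is reduced. (Correctness of the standard left-to-right reduction algorithm: a sequence of valid column operations brings any matrix to reduced form.) -/
/-! Repeatedly add a column to a later column with the same low. Over `𝔽₂` the two entries at
the common low are both `1`, so the low of the later column drops while all other lows stay
put: the vector of lows strictly decreases in the (well-founded) pointwise order on
`Fin n → WithBot (Fin m)`. Each step is right multiplication by an upper-triangular
transvection, and the process stops exactly when the matrix is reduced. -/

open Matrix

section

variable {m n : ℕ}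

theorem upperTri_iff_blockTriangular {k : ℕ} (V : Matrix (Fin k) (Fin k) (ZMod 2)) :
    UpperTri V ↔ V.BlockTriangular id :=
  Iff.rfl

theorem ne_zero_of_low_eq {R : Matrix (Fin m) (Fin n) (ZMod 2)} {j : Fin n} {ℓ : Fin m}
    (h : low R j = ℓ) : R ℓ j ≠ 0 := by
  simpa using Finset.mem_of_max h

theorem eq_zero_of_low_lt {R : Matrix (Fin m) (Fin n) (ZMod 2)} {j : Fin n} {i : Fin m}
    (h : low R j < i) : R i j = 0 := by
  simpa using Finset.notMem_of_max_lt_coe h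

theorem low_lt_coe_iff {R : Matrix (Fin m) (Fin n) (ZMod 2)} {j : Fin n} {ℓ : Fin m} :
    low R j < ℓ ↔ ∀ i, R i j ≠ 0 → i < ℓ := by
  simp [low, Finset.max, Finset.sup_lt_iff (WithBot.bot_lt_coe ℓ)]

theorem low_mul_transvection_of_ne (R : Matrix (Fin m) (Fin n) (ZMod 2)) {i j b : Fin n}
    (hb : b ≠ j) (c : ZMod 2) : low (R * transvection i j c) b = low R b := by
  simp only [low, mul_transvection_apply_of_ne _ _ _ _ hb]

theorem low_mul_transvection_lt (R : Matrix (Fin m) (Fin n) (ZMod 2)) {i j : Fin n} {ℓ : Fin m}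
    (hi : low R i = ℓ) (hj : low R j = ℓ) : low (R * transvection i j (1 : ZMod 2)) j < ℓ := by
  have one_of_ne_zero : ∀ a : ZMod 2, a ≠ 0 → a = 1 := by decide
  refine low_lt_coe_iff.2 fun k hk => ?_
  rw [mul_transvection_apply_same, one_mul] at hk
  refine lt_of_not_ge fun hℓk => hk ?_
  rcases hℓk.eq_or_lt with rfl | hℓk
  · rw [one_of_ne_zero _ (ne_zero_of_low_eq hj), one_of_ne_zero _ (ne_zero_of_low_eq hi)]
    decide
  · have above_low : ∀ c, low R c = ℓ → R k c = 0 := fun c hc =>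
      eq_zero_of_low_lt (by rw [hc]; exact WithBot.coe_lt_coe.2 hℓk)
    rw [above_low j hj, above_low i hi, add_zero]

theorem low_mul_transvection_lt_low (R : Matrix (Fin m) (Fin n) (ZMod 2)) {i j : Fin n}
    {ℓ : Fin m} (hi : low R i = ℓ) (hj : low R j = ℓ) :
    low (R * transvection i j (1 : ZMod 2)) < low R := by
  have hlt : low (R * transvection i j (1 : ZMod 2)) j < low R j := by
    rw [hj]; exact low_mul_transvection_lt R hi hj
  refine Pi.lt_def.2 ⟨fun b => ?_, j, hlt⟩
  rcases eq_or_ne b j with rfl | hb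
  · exact hlt.le
  · exact (low_mul_transvection_of_ne R hb 1).le

theorem exists_lt_low_eq_of_not_reduced {R : Matrix (Fin m) (Fin n) (ZMod 2)} (h : ¬Reduced R) :
    ∃ i j : Fin n, i < j ∧ ∃ ℓ : Fin m, low R i = ℓ ∧ low R j = ℓ := by
  simp only [Reduced, not_forall] at h
  obtain ⟨a, b, hbot, heq, hab⟩ := h
  obtain ⟨ℓ, hℓ⟩ := WithBot.ne_bot_iff_exists.1 hbot
  rcases lt_or_gt_of_ne hab with hab | hab
  · exact ⟨a, b, hab, ℓ, hℓ.symm, heq ▸ hℓ.symm⟩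
  · exact ⟨b, a, hab, ℓ, heq ▸ hℓ.symm, hℓ.symm⟩

end

/-- every matrix can be brought to reduced form by valid column operations. -/
theorem stmt_2 {m n : ℕ} (D : Matrix (Fin m) (Fin n) (ZMod 2)) :
    ∃ V : Matrix (Fin n) (Fin n) (ZMod 2), IsUnit V ∧ UpperTri V ∧ Reduced (D * V) := by
  simp only [upperTri_iff_blockTriangular]
  induction hL : low D using WellFoundedLT.induction generalizing D with
  | ind L ih =>
    by_cases hD : Reduced D
    · exact ⟨1, isUnit_one, blockTriangular_one, by rwa [Matrix.mul_one]⟩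
    obtain ⟨i, j, hij, ℓ, hi, hj⟩ := exists_lt_low_eq_of_not_reduced hD
    obtain ⟨V, hV, hVtri, hVred⟩ :=
      ih _ (hL ▸ low_mul_transvection_lt_low D hi hj) (D * transvection i j (1 : ZMod 2)) rfl
    refine ⟨transvection i j 1 * V, ?_, (blockTriangular_transvection hij.le 1).mul hVtri, ?_⟩
    · exact (isUnit_iff_isUnit_det _).2 (by simp [hij.ne]) |>.mul hV
    · rwa [← Matrix.mul_assoc]
end

section
/- Let D be an n×n matrix over 𝔽₂ with D·D = 0, let V be an invertible upper-triangular n×n matrix, and suppose R = D·V is reduced. If an index i satisfies i = low(R,j) for some nonzero column j of R, then column i of R is zero. (Correctness of clearing: a positive simplex—one appearing as the pivot low of some column—necessarily has zero column in the reduced matrix, so it may be zeroed out without reduction.) -/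
open Matrix

/-!
Let `R = D V` with `low R j = i`, and put `W = V⁻¹ R`. Then `R W = D (V V⁻¹) D V = D² V = 0`,
and since `V⁻¹` is invertible upper triangular, left multiplication by it preserves lows, so
`low W j = i` and `W i j ≠ 0`. The nonzero columns of a reduced matrix are linearly independent
(look at the row of the largest low occurring in a dependency), so `R W = 0` forces column `i`
of `R` to vanish.
-/

section Low

variable {m n : ℕ} {R : Matrix (Fin m) (Fin n) (ZMod 2)} {i : Fin m} {j : Fin n}

theorem le_low_of_ne_zero (h : R i j ≠ 0) : (i : WithBot (Fin m)) ≤ low R j :=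
  Finset.le_max (by simpa using h)

theorem apply_eq_zero_of_low_lt (h : low R j < i) : R i j = 0 :=
  not_not.mp fun hne => (le_low_of_ne_zero hne).not_gt h

theorem low_eq_bot_iff : low R j = ⊥ ↔ ∀ i, R i j = 0 := by
  rw [low, Finset.max_eq_bot, Finset.filter_eq_empty_iff]
  simp

theorem apply_ne_zero_of_low_eq (h : low R j = i) : R i j ≠ 0 := by
  simpa using Finset.mem_of_max h

theorem low_eq_iff : low R j = i ↔ R i j ≠ 0 ∧ ∀ r, i < r → R r j = 0 := by
  refine ⟨fun h => ⟨apply_ne_zero_of_low_eq h, fun r hr => apply_eq_zero_of_low_lt ?_⟩,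
    fun ⟨hi, hgt⟩ => le_antisymm (Finset.max_le fun r hr => ?_) (le_low_of_ne_zero hi)⟩
  · exact h ▸ WithBot.coe_lt_coe.mpr hr
  · have hr : R r j ≠ 0 := by simpa using hr
    exact WithBot.coe_le_coe.mpr (not_lt.mp fun hlt => hr (hgt r hlt))

end Low

theorem UpperTri.isUpperTriangular {k : ℕ} {V : Matrix (Fin k) (Fin k) (ZMod 2)}
    (hV : UpperTri V) : V.IsUpperTriangular :=
  fun i j h => hV i j h

theorem Matrix.IsUpperTriangular.apply_self_ne_zero {ι K : Type*} [Fintype ι] [LinearOrder ι]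
    [Field K] {U : Matrix ι ι K} (hU : U.IsUpperTriangular) (hUu : IsUnit U) (i : ι) :
    U i i ≠ 0 := by
  have hdet : U.det ≠ 0 := ((isUnit_iff_isUnit_det U).mp hUu).ne_zero
  rw [det_of_isUpperTriangular hU] at hdet
  exact Finset.prod_ne_zero_iff.mp hdet i (Finset.mem_univ i)

theorem low_mul_of_isUpperTriangular {m n : ℕ} {U : Matrix (Fin m) (Fin m) (ZMod 2)}
    (hU : U.IsUpperTriangular) (hd : ∀ i, U i i ≠ 0) (R : Matrix (Fin m) (Fin n) (ZMod 2))
    (j : Fin n) : low (U * R) j = low R j := by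
  rcases h : low R j with _ | i
  · exact low_eq_bot_iff.mpr fun r => by simp [mul_apply, low_eq_bot_iff.mp h]
  obtain ⟨hi, hgt⟩ := low_eq_iff.mp h
  refine low_eq_iff.mpr ⟨?_, fun r hr => ?_⟩
  · rw [mul_apply, Finset.sum_eq_single_of_mem i (Finset.mem_univ i) fun k _ hk => ?_]
    · exact mul_ne_zero (hd i) hi
    rcases hk.lt_or_gt with hk | hk
    · rw [hU hk, zero_mul]
    · rw [hgt k hk, mul_zero]
  · refine (mul_apply ..).trans (Finset.sum_eq_zero fun k _ => ?_)
    rcases lt_or_ge k r with hk | hk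
    · rw [hU hk, zero_mul]
    · rw [hgt k (hr.trans_le hk), mul_zero]

theorem Reduced.apply_eq_zero_of_mul_eq_zero {m n k : ℕ} {R : Matrix (Fin m) (Fin n) (ZMod 2)}
    (hR : Reduced R) {W : Matrix (Fin n) (Fin k) (ZMod 2)} (hRW : R * W = 0) {i : Fin n}
    (hi : low R i ≠ ⊥) (j : Fin k) : W i j = 0 := by
  by_contra hW
  set T := Finset.univ.filter fun c => W c j ≠ 0 ∧ low R c ≠ ⊥
  obtain ⟨c, hcT, hmax⟩ := T.exists_max_image (low R) ⟨i, by simp [T, hW, hi]⟩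
  obtain ⟨hWc, hc⟩ := (Finset.mem_filter.mp hcT).2
  obtain ⟨r, hr⟩ := WithBot.ne_bot_iff_exists.mp hc
  have hrow : (R * W) r j = R r c * W c j := by
    rw [mul_apply]
    refine Finset.sum_eq_single_of_mem c (Finset.mem_univ c) fun c' _ hc' => ?_
    by_cases hWc' : W c' j = 0
    · rw [hWc', mul_zero]
    by_cases hbot : low R c' = ⊥
    · rw [low_eq_bot_iff.mp hbot r, zero_mul]
    have hlt : low R c' < r :=
      hr ▸ (hmax c' (by simp [T, hWc', hbot])).lt_of_ne fun heq => hc' (hR c' c hbot heq)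
    rw [apply_eq_zero_of_low_lt hlt, zero_mul]
  rw [hRW, Matrix.zero_apply] at hrow
  exact mul_ne_zero (apply_ne_zero_of_low_eq hr.symm) hWc hrow.symm

/-- correctness of clearing—the column of a pivot row index is zero. -/
theorem stmt_3 {n : ℕ} (D V : Matrix (Fin n) (Fin n) (ZMod 2))
    (hDD : D * D = 0) (hV : IsUnit V) (hVt : UpperTri V)
    (hR : Reduced (D * V)) :
    ∀ i j : Fin n, low (D * V) j = ↑i → low (D * V) i = ⊥ := by
  intro i j hij
  have hdet : IsUnit V.det := (isUnit_iff_isUnit_det V).mp hV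
  have : Invertible V := hV.invertible
  have hVinv : V⁻¹.IsUpperTriangular :=
    blockTriangular_inv_of_blockTriangular hVt.isUpperTriangular
  have hRW : D * V * (V⁻¹ * (D * V)) = 0 := by
    rw [mul_assoc, mul_nonsing_inv_cancel_left _ _ hdet, ← mul_assoc, hDD, Matrix.zero_mul]
  have hlow : low (V⁻¹ * (D * V)) j = i := by
    rw [low_mul_of_isUpperTriangular hVinv
      (hVinv.apply_self_ne_zero (isUnit_nonsing_inv_iff.mpr hV)), hij]
  by_contra hi
  exact apply_ne_zero_of_low_eq hlow (hR.apply_eq_zero_of_mul_eq_zero hRW hi j)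
end

section
/- Let D be an n×n matrix over 𝔽₂ with D·D = 0, let V be an invertible upper-triangular n×n matrix, and suppose R = D·V is reduced. Consider the persistence pairing P = { (low(R,j), j) : column j of R is nonzero }. Then every index in {0,…,n−1} occurs in at most one pair of P, counting occurrences as either coordinate: the map j ↦ low(R,j) is injective on nonzero columns, no index is simultaneously a low of one nonzero column and the index of another nonzero column, and no index j satisfies j = low(R,j). -/
open Matrix

lemma low_apply_ne {m n : ℕ} {R : Matrix (Fin m) (Fin n) (ZMod 2)} {j : Fin n} {i : Fin m}
    (h : low R j = ↑i) : R i j ≠ 0 := by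
  have := Finset.mem_of_max h
  simpa using this

lemma le_low {m n : ℕ} {R : Matrix (Fin m) (Fin n) (ZMod 2)} {j : Fin n} {b : Fin m}
    (h : R b j ≠ 0) : (↑b : WithBot (Fin m)) ≤ low R j :=
  Finset.le_max (by simpa using h)

lemma low_gt {m n : ℕ} {R : Matrix (Fin m) (Fin n) (ZMod 2)} {j : Fin n} {i b : Fin m}
    (h : low R j = ↑i) (hb : i < b) : R b j = 0 := by
  by_contra hc
  have := le_low hc
  rw [h] at this
  exact absurd (WithBot.coe_le_coe.mp this) (not_le.mpr hb)

lemma low_eq_bot {m n : ℕ} {R : Matrix (Fin m) (Fin n) (ZMod 2)} {j : Fin n} :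
    low R j = ⊥ ↔ ∀ i, R i j = 0 := by
  rw [low, Finset.max_eq_bot, Finset.filter_eq_empty_iff]
  simp

lemma key {n : ℕ} (D V : Matrix (Fin n) (Fin n) (ZMod 2))
    (hDD : D * D = 0) (hV : IsUnit V) (hVt : UpperTri V)
    (hR : Reduced (D * V)) {i j : Fin n} (h : low (D * V) j = ↑i) :
    low (D * V) i = ⊥ := by
  set R := D * V with hRdef
  haveI := hV.invertible
  set W := V⁻¹ with hWdef
  have hWtri : W.BlockTriangular id :=
    blockTriangular_inv_of_blockTriangular (fun a b hab => hVt a b hab)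
  have hWdiag : ∀ a, W a a ≠ 0 := by
    have hdet : W.det ≠ 0 := by
      have h1 : V.det * W.det = 1 := by
        rw [← det_mul, Matrix.mul_inv_of_invertible, det_one]
      intro hz; rw [hz, mul_zero] at h1; exact zero_ne_one h1
    rw [det_of_upperTriangular hWtri] at hdet
    intro a ha
    exact hdet (Finset.prod_eq_zero (Finset.mem_univ a) ha)
  set d : Fin n → ZMod 2 := fun a => (W * R) a j with hd
  have hdi : d i ≠ 0 := by
    have : d i = W i i * R i j := by
      rw [hd]; dsimp only
      rw [mul_apply]
      refine Finset.sum_eq_single i (fun b _ hb => ?_) (by simp)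
      rcases lt_or_gt_of_ne hb with hlt | hgt
      · rw [hWtri hlt, zero_mul]
      · rw [low_gt h hgt, mul_zero]
    rw [this]
    exact mul_ne_zero (hWdiag i) (low_apply_ne h)
  have hdhigh : ∀ a, i < a → d a = 0 := by
    intro a ha
    rw [hd]; dsimp only; rw [mul_apply]
    refine Finset.sum_eq_zero fun b _ => ?_
    rcases lt_or_ge b a with hlt | hle
    · rw [hWtri hlt, zero_mul]
    · rw [low_gt h (lt_of_lt_of_le ha hle), mul_zero]
  have hsum : ∀ r, ∑ a, R r a * d a = 0 := by
    intro r
    have hz : R * (W * R) = 0 := by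
      rw [← mul_assoc, hRdef, mul_assoc D V W, Matrix.mul_inv_of_invertible, mul_one,
        ← mul_assoc, hDD, zero_mul]
    have := congrFun (congrFun hz r) j
    rw [mul_apply] at this
    simpa using this
  by_contra hne
  set T : Finset (Fin n) := Finset.univ.filter (fun a => d a ≠ 0 ∧ low R a ≠ ⊥) with hT
  have hiT : i ∈ T := by simp [hT, hdi, hne]
  obtain ⟨a', ha'T, ha'max⟩ := Finset.exists_max_image T (fun a => low R a) ⟨i, hiT⟩
  have ha' : d a' ≠ 0 ∧ low R a' ≠ ⊥ := by simpa [hT] using ha'T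
  obtain ⟨ℓ, hℓ⟩ := WithBot.ne_bot_iff_exists.mp ha'.2
  have hsum' : ∑ a, R ℓ a * d a = R ℓ a' * d a' := by
    refine Finset.sum_eq_single a' (fun a _ haa => ?_) (by simp)
    by_cases hda : d a = 0
    · rw [hda, mul_zero]
    by_cases hla : low R a = ⊥
    · rw [low_eq_bot.mp hla ℓ, zero_mul]
    have haT : a ∈ T := by simp [hT, hda, hla]
    have hle : low R a ≤ low R a' := ha'max a haT
    have hne2 : low R a ≠ low R a' := fun heq => haa (hR a a' hla heq)
    have hlt : low R a < ↑ℓ := by rw [hℓ]; exact lt_of_le_of_ne hle hne2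
    have : R ℓ a = 0 := by
      by_contra hc
      exact absurd (le_low hc) (not_le.mpr hlt)
    rw [this, zero_mul]
  rw [hsum ℓ] at hsum'
  exact mul_ne_zero (low_apply_ne hℓ.symm) ha'.1 hsum'.symm

/-- every index occurs in at most one pair of the persistence pairing. -/
theorem stmt_4 {n : ℕ} (D V : Matrix (Fin n) (Fin n) (ZMod 2))
    (hDD : D * D = 0) (hV : IsUnit V) (hVt : UpperTri V)
    (hR : Reduced (D * V)) :
    (∀ j₁ j₂ i : Fin n, low (D * V) j₁ = ↑i → low (D * V) j₂ = ↑i → j₁ = j₂) ∧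
    (∀ i j : Fin n, low (D * V) j = ↑i → low (D * V) i = ⊥) ∧
    (∀ j : Fin n, low (D * V) j ≠ ↑j) := by
  refine ⟨fun j₁ j₂ i h1 h2 => ?_, fun i j h => key D V hDD hV hVt hR h, fun j h => ?_⟩
  · exact hR j₁ j₂ (by rw [h1]; exact WithBot.coe_ne_bot) (h1.trans h2.symm)
  · have := key D V hDD hV hVt hR h
    rw [h] at this
    exact WithBot.coe_ne_bot this
end

section
/- Let R be an m×n matrix over 𝔽₂ and let R′ be obtained from R by a collision-resolving addition (replacing column i of R by column i + column j, where j < i and both columns are nonzero with low(R,j) = low(R,i)). Then the set of low values of nonzero columns of R′ contains the set of low values of nonzero columns of R. (Consequently, if the row of an index ℓ contains the lowest nonzero entry of at least one column at some stage of the reduction, it keeps this property until the end of the reduction; this justifies clearing decisions made before the reduction has finished.) -/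
open Matrix

/-- A collision-resolving addition: column `i` of `R` is replaced by
(column `i`) + (column `j`) for some `j < i` with both columns nonzero and
`low R j = low R i`. -/
def CollStep {m n : ℕ} (R R' : Matrix (Fin m) (Fin n) (ZMod 2)) : Prop :=
  ∃ i j : Fin n, j < i ∧ low R j ≠ ⊥ ∧ low R i ≠ ⊥ ∧ low R j = low R i ∧
    R' = R.updateCol i (fun k => R k i + R k j)

theorem low_updateCol_of_ne {m n : ℕ} (R : Matrix (Fin m) (Fin n) (ZMod 2)) {i c : Fin n}
    (v : Fin m → ZMod 2) (hc : c ≠ i) : low (R.updateCol i v) c = low R c := by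
  simp only [low, updateCol_ne hc]

/-- collision-resolving additions never lose low values. -/
theorem stmt_6 {m n : ℕ} (R R' : Matrix (Fin m) (Fin n) (ZMod 2))
    (h : CollStep R R') :
    ∀ ℓ : Fin m, (∃ c : Fin n, low R c = ↑ℓ) → ∃ c' : Fin n, low R' c' = ↑ℓ := by
  obtain ⟨i, j, hji, -, -, hlow, rfl⟩ := h
  rintro ℓ ⟨c, hc⟩
  by_cases hci : c = i
  · subst hci
    exact ⟨j, by rw [low_updateCol_of_ne R _ hji.ne, hlow, hc]⟩
  · exact ⟨c, by rw [low_updateCol_of_ne R _ hci, hc]⟩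
end

section
/- Let D be an m×n matrix over 𝔽₂, let U be an invertible upper-triangular m×m matrix, and let V be an invertible upper-triangular n×n matrix. Then for all indices i ∈ {0,…,m−1} and j ∈ {0,…,n−1}, the rank of the lower-left submatrix of U·D·V on rows i,…,m−1 and columns 0,…,j equals the rank of the corresponding lower-left submatrix of D: r_{U·D·V}(i,j) = r_D(i,j). -/
open Matrix

/-- `r_D(i,j)`: the rank of the lower-left submatrix of `D` on rows `i, …, m-1`
and columns `0, …, j`. -/
noncomputable def lowerLeftRank {m n : ℕ} (D : Matrix (Fin m) (Fin n) (ZMod 2))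
    (i : Fin m) (j : Fin n) : ℕ :=
  (Matrix.of fun (a : {a : Fin m // i ≤ a}) (b : {b : Fin n // b ≤ j}) => D a.1 b.1).rank

lemma diag_unit {k : ℕ} (U : Matrix (Fin k) (Fin k) (ZMod 2)) (hU : IsUnit U)
    (hUt : UpperTri U) (a : Fin k) : U a a ≠ 0 := by
  have hdet : IsUnit U.det := (Matrix.isUnit_iff_isUnit_det U).mp hU
  have htri : U.BlockTriangular id := fun i j h => hUt i j h
  rw [Matrix.det_of_upperTriangular htri] at hdet
  exact (isUnit_of_dvd_unit
    (Finset.dvd_prod_of_mem (fun i => U i i) (Finset.mem_univ a)) hdet).ne_zero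

/-- lower-left ranks are invariant under multiplication by invertible
upper-triangular matrices on both sides. -/
theorem stmt_13 {m n : ℕ} (D : Matrix (Fin m) (Fin n) (ZMod 2))
    (U : Matrix (Fin m) (Fin m) (ZMod 2)) (V : Matrix (Fin n) (Fin n) (ZMod 2))
    (hU : IsUnit U) (hUt : UpperTri U) (hV : IsUnit V) (hVt : UpperTri V) :
    ∀ (i : Fin m) (j : Fin n), lowerLeftRank (U * D * V) i j = lowerLeftRank D i j := by
  intro i j
  classical
  set U' : Matrix {a : Fin m // i ≤ a} {a : Fin m // i ≤ a} (ZMod 2) :=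
    Matrix.of fun a b => U a.1 b.1 with hU'
  set V' : Matrix {b : Fin n // b ≤ j} {b : Fin n // b ≤ j} (ZMod 2) :=
    Matrix.of fun a b => V a.1 b.1 with hV'
  set D' : Matrix {a : Fin m // i ≤ a} {b : Fin n // b ≤ j} (ZMod 2) :=
    Matrix.of fun a b => D a.1 b.1 with hD'
  have key : (Matrix.of fun (a : {a : Fin m // i ≤ a}) (b : {b : Fin n // b ≤ j}) =>
      (U * D * V) a.1 b.1) = U' * D' * V' := by
    ext a b
    have h1 : ∀ l : Fin n, (U * D) a.1 l = ∑ k : {a : Fin m // i ≤ a}, U a.1 k.1 * D k.1 l := by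
      intro l
      rw [Matrix.mul_apply]
      rw [← Finset.sum_subtype (Finset.univ.filter fun k => i ≤ k)
        (by simp) (fun k => U a.1 k * D k l)]
      symm
      apply Finset.sum_subset (Finset.filter_subset _ _)
      intro k _ hk
      simp only [Finset.mem_filter, Finset.mem_univ, true_and, not_le] at hk
      have : k < a.1 := lt_of_lt_of_le hk a.2
      rw [hUt _ _ this, zero_mul]
    have h2 : (U * D * V) a.1 b.1
        = ∑ l : {b : Fin n // b ≤ j}, (U * D) a.1 l.1 * V l.1 b.1 := by
      rw [Matrix.mul_apply]
      rw [← Finset.sum_subtype (Finset.univ.filter fun l => l ≤ j)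
        (by simp) (fun l => (U * D) a.1 l * V l b.1)]
      symm
      apply Finset.sum_subset (Finset.filter_subset _ _)
      intro l _ hl
      simp only [Finset.mem_filter, Finset.mem_univ, true_and, not_le] at hl
      have : b.1 < l := lt_of_le_of_lt b.2 hl
      rw [hVt _ _ this, mul_zero]
    simp only [Matrix.of_apply, h2]
    rw [Matrix.mul_apply]
    refine Finset.sum_congr rfl fun l _ => ?_
    rw [h1, Matrix.mul_apply]
    simp [hU', hD', hV']
  have hdetU' : IsUnit U'.det := by
    have htri : U'.BlockTriangular id := by
      intro a b h
      exact hUt a.1 b.1 (by exact_mod_cast h)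
    rw [Matrix.det_of_upperTriangular htri]
    rw [isUnit_iff_ne_zero, Finset.prod_ne_zero_iff]
    exact fun a _ => diag_unit U hU hUt a.1
  have hdetV' : IsUnit V'.det := by
    have htri : V'.BlockTriangular id := by
      intro a b h
      exact hVt a.1 b.1 (by exact_mod_cast h)
    rw [Matrix.det_of_upperTriangular htri]
    rw [isUnit_iff_ne_zero, Finset.prod_ne_zero_iff]
    exact fun a _ => diag_unit V hV hVt a.1
  unfold lowerLeftRank
  rw [key, Matrix.rank_mul_eq_left_of_isUnit_det _ _ hdetV',
    Matrix.rank_mul_eq_right_of_isUnit_det _ _ hdetU']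
end

section
/- Let D be an m×n matrix over 𝔽₂, let V be an invertible upper-triangular n×n matrix, and suppose R = D·V is reduced. Then for all indices i ∈ {0,…,m−1} and j ∈ {0,…,n−1}: column j of R is nonzero with low(R,j) = i if and only if r_D(i,j) − r_D(i+1,j) − r_D(i,j−1) + r_D(i+1,j−1) = 1, where by convention r_D(i,−1) = 0 and r_D(m,j) = 0. (The pivots of any reduced form of D are determined by the ranks of the lower-left submatrices of D; this is the pairing uniqueness formula.) -/
open Matrix

/-- `rk D i j`: the rank of the submatrix of `D` on rows `i, …, m-1` and columns
`0, …, j-1` (so the paper's `r_D(i,j)` is `rk D i (j+1)`, and the conventions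
`r_D(i,-1) = 0`, `r_D(m,j) = 0` hold automatically since the corresponding
submatrices are empty). -/
noncomputable def rk {m n : ℕ} (D : Matrix (Fin m) (Fin n) (ZMod 2)) (i j : ℕ) : ℕ :=
  (Matrix.of fun (a : {a : Fin m // i ≤ a.val}) (b : {b : Fin n // b.val < j}) => D a.1 b.1).rank

/-!
Right multiplication by an invertible upper-triangular `V` only adds multiples of earlier columns
to later ones, so it preserves every rank `r_D(i,j)`, and the ranks may be computed in `R = D V`.
There, the nonzero columns of a lower-left submatrix of `R` have pairwise distinct lows, hence are
linearly independent, so `r_R(i,j)` counts the columns `b ≤ j` with `low(R,b) ≥ i`. The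
alternating sum of four such counts is `1` exactly when `low(R,j) = i`.
-/

open Finset

def IsLastNonzero {K α : Type*} [Zero K] [LT α] (v : α → K) (a : α) : Prop :=
  v a ≠ 0 ∧ ∀ b, a < b → v b = 0

section LastNonzero

variable {K α ι : Type*} [LinearOrder α]

theorem exists_isLastNonzero [Zero K] [Fintype α] {v : α → K} (hv : v ≠ 0) :
    ∃ a, IsLastNonzero v a := by
  classical
  obtain ⟨a, ha⟩ := Function.ne_iff.mp hv
  have hs : (univ.filter fun b => v b ≠ 0).Nonempty := ⟨a, by simpa using ha⟩
  refine ⟨_, by simpa using max'_mem _ hs, fun b hb => ?_⟩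
  by_contra h
  exact (le_max' _ b (by simpa using h)).not_gt hb

theorem linearIndependent_of_isLastNonzero [Ring K] [NoZeroDivisors K] [Fintype ι]
    {v : ι → α → K} {p : ι → α} (hp : Function.Injective p)
    (hv : ∀ k, IsLastNonzero (v k) (p k)) : LinearIndependent K v := by
  classical
  rw [Fintype.linearIndependent_iff]
  intro g hg
  by_contra! hex
  have hs : (univ.filter fun k => g k ≠ 0).Nonempty := by simpa [Finset.Nonempty] using hex
  obtain ⟨k₀, hk₀, hmax⟩ := exists_max_image _ p hs
  -- at the row `p k₀`, every other vector with a nonzero coefficient has already vanished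
  have hsingle : ∑ k, g k * v k (p k₀) = g k₀ * v k₀ (p k₀) := by
    refine sum_eq_single k₀ (fun k _ hk => ?_) (by simp)
    by_cases hgk : g k = 0
    · simp [hgk]
    · have hlt : p k < p k₀ := (hmax k (by simpa using hgk)).lt_of_ne (hp.ne hk)
      simp [(hv k).2 _ hlt]
  have h0 := congrFun hg (p k₀)
  simp only [Finset.sum_apply, Pi.smul_apply, smul_eq_mul, Pi.zero_apply] at h0
  rw [hsingle] at h0
  exact mul_ne_zero (by simpa using hk₀) (hv k₀).1 h0

end LastNonzero

namespace Matrix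

variable {K α β ι : Type*}

theorem rank_eq_card_col_ne_zero_of_reduced [Field K] [DecidableEq K] [LinearOrder α]
    [Fintype α] [Fintype ι] (M : Matrix α ι K)
    (hM : ∀ a k k', IsLastNonzero (M.col k) a → IsLastNonzero (M.col k') a → k = k') :
    M.rank = #{k | M.col k ≠ 0} := by
  choose p hp using fun k : {k // M.col k ≠ 0} => exists_isLastNonzero k.2
  have hind : LinearIndependent K (M.submatrix id ((↑) : {k // M.col k ≠ 0} → ι))ᵀ.row :=
    linearIndependent_of_isLastNonzero
      (fun k k' h => Subtype.ext (hM _ _ _ (hp k) (by rw [h]; exact hp k'))) hp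
  apply le_antisymm
  · rw [← rank_transpose]
    exact rank_le_card_of_support_subset _ _ fun k hk => by simpa using hk
  · calc #{k | M.col k ≠ 0} = (M.submatrix id ((↑) : {k // M.col k ≠ 0} → ι)).rank := by
          rw [← rank_transpose, hind.rank_matrix, Fintype.card_subtype]
      _ ≤ M.rank := rank_submatrix_le _ _ _

theorem submatrix_mul_of_isUpperTriangular [NonUnitalNonAssocSemiring K] [Fintype β]
    [LinearOrder β] (A : Matrix α β K) {V : Matrix β β K} (hV : V.IsUpperTriangular)
    {p : β → Prop} [DecidablePred p] (hp : IsLowerSet {b | p b}) :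
    (A * V).submatrix id (Subtype.val : {b // p b} → β) =
      A.submatrix id (Subtype.val : {b // p b} → β) *
        V.submatrix (Subtype.val : {b // p b} → β) Subtype.val := by
  ext a b
  simp only [submatrix_apply, id, mul_apply]
  rw [← sum_subtype (univ.filter p) (by simp) (fun c => A a c * V c b), sum_filter_of_ne]
  intro c _ hc
  by_contra hpc
  have hbc : (b : β) < c := lt_of_not_ge fun hcb => hpc (hp hcb b.2)
  exact hc (by rw [hV hbc, mul_zero])

theorem rank_submatrix_mul_of_isUpperTriangular [CommRing K] [IsDomain K] [Fintype β]
    [LinearOrder β] (A : Matrix α β K) {V : Matrix β β K} (hV : V.IsUpperTriangular)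
    (hVu : IsUnit V) {p : β → Prop} [DecidablePred p] (hp : IsLowerSet {b | p b}) :
    ((A * V).submatrix id (Subtype.val : {b // p b} → β)).rank =
      (A.submatrix id (Subtype.val : {b // p b} → β)).rank := by
  have hdiag : ∀ b, V b b ≠ 0 := by
    have := ((isUnit_iff_isUnit_det V).mp hVu).ne_zero
    rw [det_of_isUpperTriangular hV, prod_ne_zero_iff] at this
    exact fun b => this b (mem_univ b)
  have hdet : (V.submatrix (Subtype.val : {b // p b} → β) Subtype.val).det ≠ 0 := by
    have htri : (V.submatrix (Subtype.val : {b // p b} → β) Subtype.val).IsUpperTriangular :=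
      fun _ _ h => hV h
    rw [det_of_isUpperTriangular htri, prod_ne_zero_iff]
    exact fun b _ => hdiag b
  rw [submatrix_mul_of_isUpperTriangular A hV hp, rank_mul_eq_left_of_det_ne_zero _ _ hdet]

end Matrix

section Pairing

variable {m n : ℕ}

theorem low_eq_coe_iff {R : Matrix (Fin m) (Fin n) (ZMod 2)} {j : Fin n} {i : Fin m} :
    low R j = ↑i ↔ IsLastNonzero (R.col j) i := by
  refine ⟨fun h => ⟨by simpa using mem_of_max h, fun a hia => ?_⟩, fun h => ?_⟩
  · by_contra ha
    exact (WithBot.coe_le_coe.mp (h ▸ le_max (by simpa using ha))).not_gt hia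
  · refine le_antisymm (Finset.max_le fun a ha => WithBot.coe_le_coe.mpr ?_)
      (le_max (by simpa using h.1))
    by_contra! hia
    exact (by simpa using ha : R a j ≠ 0) (h.2 a hia)

theorem isLastNonzero_iff_exists_le {K : Type*} [Zero K] (v : Fin m → K) (i : Fin m) :
    IsLastNonzero v i ↔
      (∃ a : Fin m, i.val ≤ a.val ∧ v a ≠ 0) ∧ ¬∃ a : Fin m, i.val + 1 ≤ a.val ∧ v a ≠ 0 := by
  constructor
  · rintro ⟨hi, hlast⟩
    exact ⟨⟨i, le_rfl, hi⟩, fun ⟨a, hia, ha⟩ => ha (hlast a (Fin.lt_def.mpr hia))⟩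
  · rintro ⟨⟨a, hia, ha⟩, hnone⟩
    have hai : a = i := Fin.ext (le_antisymm (not_lt.mp fun h => hnone ⟨a, h, ha⟩) hia)
    exact ⟨hai ▸ ha, fun b hib => by_contra fun hb => hnone ⟨b, Fin.lt_def.mp hib, hb⟩⟩

theorem rk_mul_of_upperTri (D : Matrix (Fin m) (Fin n) (ZMod 2))
    {V : Matrix (Fin n) (Fin n) (ZMod 2)} (hV : IsUnit V) (hVt : UpperTri V) (i j : ℕ) :
    rk (D * V) i j = rk D i j :=
  rank_submatrix_mul_of_isUpperTriangular
    (D.submatrix (Subtype.val : {a : Fin m // i ≤ a.val} → Fin m) id) (fun a b h => hVt a b h)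
    hV (p := fun b : Fin n => b.val < j)
    fun _ _ hba ha => show _ < j from (Fin.le_def.mp hba).trans_lt ha

theorem rk_eq_card_of_reduced {R : Matrix (Fin m) (Fin n) (ZMod 2)} (hR : Reduced R) (i j : ℕ) :
    rk R i j = #{b | b.val < j ∧ ∃ a : Fin m, i ≤ a.val ∧ R a b ≠ 0} := by
  set M : Matrix {a : Fin m // i ≤ a.val} {b : Fin n // b.val < j} (ZMod 2) :=
    of fun a b => R a.1 b.1
  -- every row of `R` past a row of `M` is again a row of `M`
  have hlow : ∀ a k, IsLastNonzero (M.col k) a → low R k = a.1 := fun a k h =>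
    low_eq_coe_iff.mpr ⟨h.1, fun c hac => h.2 ⟨c, a.2.trans hac.le⟩ hac⟩
  have hcol : ∀ k, M.col k ≠ 0 ↔ ∃ a : Fin m, i ≤ a.val ∧ R a k ≠ 0 := fun k => by
    simp [M, funext_iff]
  rw [rk, rank_eq_card_col_ne_zero_of_reduced M fun a k k' hk hk' =>
    Subtype.ext (hR _ _ (by simp [hlow a k hk]) ((hlow a k hk).trans (hlow a k' hk').symm))]
  simp only [hcol]
  rw [← Fintype.card_subtype, ← Fintype.card_subtype]
  exact Fintype.card_congr <|
    Equiv.subtypeSubtypeEquivSubtypeInter _ fun b => ∃ a : Fin m, i ≤ a.val ∧ R a b ≠ 0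

theorem card_filter_val_lt_succ (Q : Fin n → Prop) [DecidablePred Q] (j : Fin n) :
    #{b | b.val < j.val + 1 ∧ Q b} = #{b | b.val < j.val ∧ Q b} + if Q j then 1 else 0 := by
  have hIic : ({b | b.val < j.val + 1 ∧ Q b} : Finset (Fin n)) = (Iic j).filter Q := by
    ext b
    simp only [mem_filter, mem_univ, true_and, mem_Iic, Nat.lt_succ_iff, Fin.le_def]
  have hIio : ({b | b.val < j.val ∧ Q b} : Finset (Fin n)) = (Iio j).filter Q := by
    ext b
    simp only [mem_filter, mem_univ, true_and, mem_Iio, Fin.lt_def]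
  rw [hIic, hIio, ← Iio_insert, filter_insert]
  split_ifs <;> simp

end Pairing

/-- pairing uniqueness formula. Column `j` of the reduced matrix is
nonzero with `low` equal to `i` iff
`r_D(i,j) − r_D(i+1,j) − r_D(i,j−1) + r_D(i+1,j−1) = 1`, written additively. -/
theorem stmt_14 {m n : ℕ} (D : Matrix (Fin m) (Fin n) (ZMod 2))
    (V : Matrix (Fin n) (Fin n) (ZMod 2)) (hV : IsUnit V) (hVt : UpperTri V)
    (hR : Reduced (D * V)) :
    ∀ (i : Fin m) (j : Fin n),
      low (D * V) j = ↑i ↔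
        rk D i.val (j.val + 1) + rk D (i.val + 1) j.val
          = rk D (i.val + 1) (j.val + 1) + rk D i.val j.val + 1 := by
  intro i j
  simp only [← rk_mul_of_upperTri D hV hVt, rk_eq_card_of_reduced hR, card_filter_val_lt_succ,
    low_eq_coe_iff, isLastNonzero_iff_exists_le, col_apply]
  have hmono : (∃ a : Fin m, i.val + 1 ≤ a.val ∧ (D * V) a j ≠ 0) →
      ∃ a : Fin m, i.val ≤ a.val ∧ (D * V) a j ≠ 0 := fun ⟨a, ha, h⟩ => ⟨a, by omega, h⟩
  split_ifs with h₁ h₂ h₂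
  · simp only [h₂, not_true, and_false, false_iff]; omega
  · simp only [h₁, h₂, not_false_eq_true, and_self, true_iff]; omega
  · exact absurd (hmono h₂) h₁
  · simp only [h₁, false_and, false_iff]; omega
end
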